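/- arXiv:2404.11991 — 2 statements merged into one kernel-verified Lean document; each statement's English description precedes it below -/
import Mathlib

section
/- For the Grushin distance d on ℝ^N × ℝ^l and any b > 0, away from the set {x̃ = 0} ∪ {z̃ = 0} one has Δ_γ d(z̃,0)^{-b} = b(b - N - (1+γ)l + 2) (1/(1+γ)²) |x̃|^{2γ} d(z̃,0)^{-b-2-2γ}, where Δ_γ = Δ_{x̃} + |x̃|^{2γ} Δ_{ỹ}. In particular, for b = N + (1+γ)l - 2 the function d(z̃,0)^{-b} is Δ_γ-harmonic away from the degenerate set. -/
/-!
`d^a` depends on `z` only through `X = |x|²` and `Y = |y|²`: it is `S^{a/(2+2γ)}` with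
`S = X^{1+γ}/(1+γ)² + Y = d^{2+2γ}`. For a function of the form `G(|x|²)`, the `x`-Laplacian is
`2N G'(X) + 4X G''(X)`, and likewise in `y`; so `Δ_γ d^a` is an explicit combination of the
first and second derivatives of `X ↦ S^p` and `Y ↦ S^p`. In that combination the terms with
`X^{2γ+1}` and with `Y` recombine into a multiple of `S` itself, and everything collapses to
`a(a + N + (1+γ)l - 2)/(1+γ)² · X^γ · S^{p-1}`.
-/

open MeasureTheory Real

noncomputable section

variable {N l : ℕ}

/-- squared Euclidean norm -/
def nsq {n : ℕ} (x : Fin n → ℝ) : ℝ := ∑ i, x i ^ 2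

/-- partial derivative in the `i`-th `x` direction -/
def pdx (u : (Fin N → ℝ) × (Fin l → ℝ) → ℝ) (i : Fin N)
    (z : (Fin N → ℝ) × (Fin l → ℝ)) : ℝ :=
  deriv (fun t => u (Function.update z.1 i t, z.2)) (z.1 i)

/-- partial derivative in the `j`-th `y` direction -/
def pdy (u : (Fin N → ℝ) × (Fin l → ℝ) → ℝ) (j : Fin l)
    (z : (Fin N → ℝ) × (Fin l → ℝ)) : ℝ :=
  deriv (fun t => u (z.1, Function.update z.2 j t)) (z.2 j)

/-- Grushin operator `Δ_γ u = Δ_x u + |x|^{2γ} Δ_y u` -/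
def grushinLap (γ : ℝ) (u : (Fin N → ℝ) × (Fin l → ℝ) → ℝ)
    (z : (Fin N → ℝ) × (Fin l → ℝ)) : ℝ :=
  (∑ i, pdx (pdx u i) i z) + (nsq z.1) ^ γ * ∑ j, pdy (pdy u j) j z

/-- the Grushin distance to the origin:
`d(z,0) = ((1/(1+γ)²)|x|^{2+2γ} + |y|²)^{1/(2+2γ)}` (note `|x|^{2+2γ} = (nsq x)^{1+γ}`). -/
def gd (γ : ℝ) (z : (Fin N → ℝ) × (Fin l → ℝ)) : ℝ :=
  ((1 / (1 + γ) ^ 2) * (nsq z.1) ^ (1 + γ) + nsq z.2) ^ (1 / (2 + 2 * γ))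

/-- the Grushin inversion `x̃ = x/d², ỹ = y/d^{2+2γ}` -/
def ginv (γ : ℝ) (z : (Fin N → ℝ) × (Fin l → ℝ)) : (Fin N → ℝ) × (Fin l → ℝ) :=
  (fun i => z.1 i / gd γ z ^ 2, fun j => z.2 j / gd γ z ^ (2 + 2 * γ))

/-- divergence of a vector field on `ℝ^N × ℝ^l` -/
def gdiv (X : (Fin N → ℝ) × (Fin l → ℝ) → (Fin N → ℝ) × (Fin l → ℝ))
    (z : (Fin N → ℝ) × (Fin l → ℝ)) : ℝ :=
  (∑ i, pdx (fun w => (X w).1 i) i z) + ∑ j, pdy (fun w => (X w).2 j) j z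

/-- Euclidean dot product on `ℝ^N × ℝ^l` -/
def gdot (v w : (Fin N → ℝ) × (Fin l → ℝ)) : ℝ :=
  (∑ i, v.1 i * w.1 i) + ∑ j, v.2 j * w.2 j

open Filter Topology

lemma nsq_nonneg {n : ℕ} (x : Fin n → ℝ) : 0 ≤ nsq x :=
  Finset.sum_nonneg fun i _ => sq_nonneg (x i)

lemma nsq_pos {n : ℕ} {x : Fin n → ℝ} (hx : x ≠ 0) : 0 < nsq x := by
  obtain ⟨i, hi⟩ := Function.ne_iff.mp hx
  exact Finset.sum_pos' (fun j _ => sq_nonneg (x j))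
    ⟨i, Finset.mem_univ i, pow_two_pos_of_ne_zero hi⟩

lemma nsq_update {n : ℕ} (x : Fin n → ℝ) (i : Fin n) (t : ℝ) :
    nsq (Function.update x i t) = nsq x - x i ^ 2 + t ^ 2 := by
  have hsq : ∀ j, Function.update x i t j ^ 2 = Function.update (fun j => x j ^ 2) i (t ^ 2) j :=
    fun j => (Function.apply_update (fun _ s => s ^ 2) x i t j)
  simp only [nsq, hsq, Finset.sum_update_of_mem (Finset.mem_univ i),
    Finset.sum_eq_add_sum_sdiff_singleton_of_mem (Finset.mem_univ i) fun j => x j ^ 2]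
  ring

lemma deriv_deriv_comp_add_sq {g g' : ℝ → ℝ} {g'' Q t : ℝ}
    (hg : ∀ᶠ s in 𝓝 (Q + t ^ 2), HasDerivAt g (g' s) s) (hg' : HasDerivAt g' g'' (Q + t ^ 2)) :
    deriv (deriv fun s => g (Q + s ^ 2)) t = 2 * g' (Q + t ^ 2) + 4 * t ^ 2 * g'' := by
  have hq : ∀ s : ℝ, HasDerivAt (fun s => Q + s ^ 2) (2 * s) s := fun s => by
    simpa using (hasDerivAt_pow 2 s).const_add Q
  have hcont : Tendsto (fun s : ℝ => Q + s ^ 2) (𝓝 t) (𝓝 (Q + t ^ 2)) :=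
    ((continuous_pow 2).const_add Q).tendsto t
  have hfirst : deriv (fun s => g (Q + s ^ 2)) =ᶠ[𝓝 t] fun s => 2 * s * g' (Q + s ^ 2) := by
    filter_upwards [hcont.eventually hg] with s hs
    exact (hs.comp s (hq s)).deriv.trans (mul_comm _ _)
  have hsecond := ((hasDerivAt_id t).const_mul 2).mul (hg'.comp t (hq t))
  rw [hfirst.deriv_eq]
  exact hsecond.deriv.trans (by simp only [id, Function.comp_apply]; ring)

lemma pdx_pdx_of_eq_comp_nsq {u : (Fin N → ℝ) × (Fin l → ℝ) → ℝ} {G G' : ℝ → ℝ} {G'' : ℝ}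
    {z : (Fin N → ℝ) × (Fin l → ℝ)} (hu : ∀ x, u (x, z.2) = G (nsq x))
    (hG : ∀ᶠ s in 𝓝 (nsq z.1), HasDerivAt G (G' s) s) (hG' : HasDerivAt G' G'' (nsq z.1))
    (i : Fin N) : pdx (pdx u i) i z = 2 * G' (nsq z.1) + 4 * z.1 i ^ 2 * G'' := by
  have hQ : nsq z.1 - z.1 i ^ 2 + z.1 i ^ 2 = nsq z.1 := sub_add_cancel _ _
  have hinner : (fun t => pdx u i (Function.update z.1 i t, z.2))
      = deriv fun s => G (nsq z.1 - z.1 i ^ 2 + s ^ 2) := by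
    funext t
    simp only [pdx, Function.update_idem, Function.update_self, hu, nsq_update]
  rw [← hQ] at hG hG'
  change deriv (fun t => pdx u i (Function.update z.1 i t, z.2)) (z.1 i) = _
  rw [hinner, deriv_deriv_comp_add_sq hG hG', hQ]

lemma sum_pdx_pdx_of_eq_comp_nsq {u : (Fin N → ℝ) × (Fin l → ℝ) → ℝ} {G G' : ℝ → ℝ} {G'' : ℝ}
    {z : (Fin N → ℝ) × (Fin l → ℝ)} (hu : ∀ x, u (x, z.2) = G (nsq x))
    (hG : ∀ᶠ s in 𝓝 (nsq z.1), HasDerivAt G (G' s) s) (hG' : HasDerivAt G' G'' (nsq z.1)) :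
    ∑ i, pdx (pdx u i) i z = 2 * N * G' (nsq z.1) + 4 * nsq z.1 * G'' := by
  simp only [pdx_pdx_of_eq_comp_nsq hu hG hG', Finset.sum_add_distrib, Finset.sum_const,
    Finset.card_univ, Fintype.card_fin, nsmul_eq_mul, ← Finset.sum_mul, ← Finset.mul_sum, nsq]
  ring

lemma pdy_pdy_eq_pdx_pdx_comp_swap (u : (Fin N → ℝ) × (Fin l → ℝ) → ℝ) (j : Fin l)
    (z : (Fin N → ℝ) × (Fin l → ℝ)) :
    pdy (pdy u j) j z = pdx (pdx (u ∘ Prod.swap) j) j z.swap :=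
  rfl

lemma sum_pdy_pdy_of_eq_comp_nsq {u : (Fin N → ℝ) × (Fin l → ℝ) → ℝ} {G G' : ℝ → ℝ} {G'' : ℝ}
    {z : (Fin N → ℝ) × (Fin l → ℝ)} (hu : ∀ y, u (z.1, y) = G (nsq y))
    (hG : ∀ᶠ s in 𝓝 (nsq z.2), HasDerivAt G (G' s) s) (hG' : HasDerivAt G' G'' (nsq z.2)) :
    ∑ j, pdy (pdy u j) j z = 2 * l * G' (nsq z.2) + 4 * nsq z.2 * G'' := by
  simp only [pdy_pdy_eq_pdx_pdx_comp_swap]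
  exact sum_pdx_pdx_of_eq_comp_nsq (u := u ∘ Prod.swap) (z := z.swap) hu hG hG'

/-- `d^{2+2γ}` as a function of `X = |x|²` and `Y = |y|²`. -/
def gdPow (γ X Y : ℝ) : ℝ := 1 / (1 + γ) ^ 2 * X ^ (1 + γ) + Y

lemma gd_rpow (γ a : ℝ) (w : (Fin N → ℝ) × (Fin l → ℝ)) :
    gd γ w ^ a = gdPow γ (nsq w.1) (nsq w.2) ^ (a / (2 + 2 * γ)) := by
  have hS : 0 ≤ gdPow γ (nsq w.1) (nsq w.2) :=
    add_nonneg (mul_nonneg (by positivity) (rpow_nonneg (nsq_nonneg _) _)) (nsq_nonneg _)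
  rw [gd, ← gdPow, ← rpow_mul hS]
  ring_nf

section gdPow

variable {γ X Y : ℝ}

lemma gdPow_pos (hγ : 1 + γ ≠ 0) (hX : 0 < X) (hY : 0 ≤ Y) : 0 < gdPow γ X Y := by
  unfold gdPow
  have : 0 < (1 + γ) ^ 2 := by positivity
  positivity

lemma hasDerivAt_gdPow_rpow_fst (hγ : 1 + γ ≠ 0) (hX : 0 < X) (hS : gdPow γ X Y ≠ 0) (p : ℝ) :
    HasDerivAt (fun X => gdPow γ X Y ^ p) (p / (1 + γ) * (X ^ γ * gdPow γ X Y ^ (p - 1))) X := by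
  have h := ((((hasDerivAt_id' X).rpow_const (p := 1 + γ) (Or.inl hX.ne')).const_mul
    (1 / (1 + γ) ^ 2)).add_const Y).rpow_const (p := p) (Or.inl hS)
  rw [add_sub_cancel_left] at h
  refine h.congr_deriv ?_
  change _ * gdPow γ X Y ^ (p - 1) = _
  field_simp

lemma hasDerivAt_gdPow_rpow_fst_deriv (hγ : 1 + γ ≠ 0) (hX : 0 < X) (hS : gdPow γ X Y ≠ 0)
    (p : ℝ) :
    HasDerivAt (fun X => p / (1 + γ) * (X ^ γ * gdPow γ X Y ^ (p - 1)))
      (p / (1 + γ) * (γ * X ^ (γ - 1) * gdPow γ X Y ^ (p - 1)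
        + (p - 1) / (1 + γ) * X ^ γ * X ^ γ * gdPow γ X Y ^ (p - 2))) X := by
  have h := (((hasDerivAt_id' X).rpow_const (p := γ) (Or.inl hX.ne')).mul
    (hasDerivAt_gdPow_rpow_fst hγ hX hS (p - 1))).const_mul (p / (1 + γ))
  refine h.congr_deriv ?_
  rw [sub_sub, one_add_one_eq_two]
  ring

lemma hasDerivAt_gdPow_rpow_snd (hS : gdPow γ X Y ≠ 0) (p : ℝ) :
    HasDerivAt (fun Y => gdPow γ X Y ^ p) (p * gdPow γ X Y ^ (p - 1)) Y :=
  (((hasDerivAt_id' Y).const_add _).rpow_const (Or.inl hS)).congr_deriv (by rw [one_mul]; rfl)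

end gdPow

section gdPowRpow

variable {γ : ℝ} {z : (Fin N → ℝ) × (Fin l → ℝ)}

lemma sum_pdx_pdx_gdPow_rpow (hγ : 1 + γ ≠ 0) (p : ℝ) (hx : z.1 ≠ 0) :
    ∑ i, pdx (pdx (fun w => gdPow γ (nsq w.1) (nsq w.2) ^ p) i) i z
      = 2 * N * (p / (1 + γ) * (nsq z.1 ^ γ * gdPow γ (nsq z.1) (nsq z.2) ^ (p - 1)))
        + 4 * nsq z.1 * (p / (1 + γ) *
          (γ * nsq z.1 ^ (γ - 1) * gdPow γ (nsq z.1) (nsq z.2) ^ (p - 1)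
            + (p - 1) / (1 + γ) * nsq z.1 ^ γ * nsq z.1 ^ γ
              * gdPow γ (nsq z.1) (nsq z.2) ^ (p - 2))) := by
  have hX : 0 < nsq z.1 := nsq_pos hx
  refine sum_pdx_pdx_of_eq_comp_nsq (G := fun X => gdPow γ X (nsq z.2) ^ p) (fun _ => rfl) ?_
    (hasDerivAt_gdPow_rpow_fst_deriv hγ hX (gdPow_pos hγ hX (nsq_nonneg z.2)).ne' p)
  filter_upwards [lt_mem_nhds hX] with X hX'
  exact hasDerivAt_gdPow_rpow_fst hγ hX' (gdPow_pos hγ hX' (nsq_nonneg z.2)).ne' p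

lemma sum_pdy_pdy_gdPow_rpow (hγ : 1 + γ ≠ 0) (p : ℝ) (hx : z.1 ≠ 0) :
    ∑ j, pdy (pdy (fun w => gdPow γ (nsq w.1) (nsq w.2) ^ p) j) j z
      = 2 * l * (p * gdPow γ (nsq z.1) (nsq z.2) ^ (p - 1))
        + 4 * nsq z.2 * (p * ((p - 1) * gdPow γ (nsq z.1) (nsq z.2) ^ (p - 1 - 1))) := by
  have hS : gdPow γ (nsq z.1) (nsq z.2) ≠ 0 :=
    (gdPow_pos hγ (nsq_pos hx) (nsq_nonneg z.2)).ne'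
  refine sum_pdy_pdy_of_eq_comp_nsq (G := fun Y => gdPow γ (nsq z.1) Y ^ p) (fun _ => rfl) ?_
    ((hasDerivAt_gdPow_rpow_snd hS (p - 1)).const_mul p)
  have hcont : Continuous fun Y => gdPow γ (nsq z.1) Y := continuous_const_add _
  filter_upwards [hcont.continuousAt.eventually_ne hS] with Y hY
  exact hasDerivAt_gdPow_rpow_snd hY p

lemma grushinLap_gd_rpow (hγ : 1 + γ ≠ 0) (a : ℝ) (hx : z.1 ≠ 0) :
    grushinLap γ (fun w => gd γ w ^ a) z
      = a * (a + N + (1 + γ) * l - 2) * (1 / (1 + γ) ^ 2) * nsq z.1 ^ γ *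
          gd γ z ^ (a - 2 - 2 * γ) := by
  set p := a / (2 + 2 * γ) with hp
  have hX : 0 < nsq z.1 := nsq_pos hx
  have hS : 0 < gdPow γ (nsq z.1) (nsq z.2) := gdPow_pos hγ hX (nsq_nonneg z.2)
  have hexp : (a - 2 - 2 * γ) / (2 + 2 * γ) = p - 1 := by
    rw [hp]
    field_simp
    ring
  have hS_mul : (1 + γ) ^ 2 * gdPow γ (nsq z.1) (nsq z.2)
      = nsq z.1 * nsq z.1 ^ γ + (1 + γ) ^ 2 * nsq z.2 := by
    rw [gdPow, rpow_add hX, rpow_one]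
    field_simp
  rw [funext (gd_rpow γ a), grushinLap, sum_pdx_pdx_gdPow_rpow hγ p hx,
    sum_pdy_pdy_gdPow_rpow hγ p hx, gd_rpow, hexp, rpow_sub_one hX.ne',
    show p - 2 = p - 1 - 1 by ring, rpow_sub_one hS.ne' (p - 1)]
  generalize gdPow γ (nsq z.1) (nsq z.2) ^ (p - 1) = T
  rw [hp]
  field_simp
  linear_combination -4 * a * T * (a - 2 * (1 + γ)) * hS_mul

end gdPowRpow

theorem grushinLap_gd_rpow_neg_general (γ b : ℝ) (hγ : 0 ≤ γ)
    (z : (Fin N → ℝ) × (Fin l → ℝ)) (hx : z.1 ≠ 0) :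
    grushinLap γ (fun w => gd γ w ^ (-b)) z
        = b * (b - N - (1 + γ) * l + 2) * (1 / (1 + γ) ^ 2) * (nsq z.1) ^ γ *
            gd γ z ^ (-b - 2 - 2 * γ) ∧
    (b = N + (1 + γ) * l - 2 → grushinLap γ (fun w => gd γ w ^ (-b)) z = 0) := by
  have hlap : grushinLap γ (fun w => gd γ w ^ (-b)) z
      = b * (b - N - (1 + γ) * l + 2) * (1 / (1 + γ) ^ 2) * (nsq z.1) ^ γ *
          gd γ z ^ (-b - 2 - 2 * γ) := by
    rw [grushinLap_gd_rpow (by linarith) (-b) hx]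
    ring
  exact ⟨hlap, fun hcrit => by rw [hlap, hcrit]; ring⟩

/-- `Δ_γ d^{-b} = b(b - N - (1+γ)l + 2)(1/(1+γ)²)|x̃|^{2γ} d^{-b-2-2γ}`
away from `{x̃ = 0} ∪ {z̃ = 0}`; in particular `d^{-b}` is `Δ_γ`-harmonic there for
`b = N + (1+γ)l - 2`. -/
theorem grushinLap_gd_rpow_neg (γ b : ℝ) (hγ : 0 ≤ γ) (hb : 0 < b)
    (z : (Fin N → ℝ) × (Fin l → ℝ)) (hx : z.1 ≠ 0) :
    grushinLap γ (fun w => gd γ w ^ (-b)) z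
        = b * (b - N - (1 + γ) * l + 2) * (1 / (1 + γ) ^ 2) * (nsq z.1) ^ γ *
            gd γ z ^ (-b - 2 - 2 * γ) ∧
    (b = N + (1 + γ) * l - 2 → grushinLap γ (fun w => gd γ w ^ (-b)) z = 0) :=
  grushinLap_gd_rpow_neg_general γ b hγ z hx
end
end

section
/- Invariance of the critical Lebesgue norm under Kelvin transform: let N_γ = N + (1+γ)l, 2*_γ = 2N_γ/(N_γ-2), and w(z̃) = d(z,0)^{N_γ-2}u(z) with z the Grushin inversion of z̃. Then ∫_{ℝ^{N+l}} |w(z̃)|^{2*_γ} dz̃ = ∫_{ℝ^{N+l}} |u(z)|^{2*_γ} dz, since the Jacobian of the inversion map equals d(z,0)^{-2N-(2+2γ)l} in absolute value. -/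
open MeasureTheory Real

noncomputable section

variable {N l : ℕ}

/-! The Grushin inversion is a dilation `δ_t (x, y) = (t x, t ^ (1 + γ) y)` with variable factor:
`ginv z = δ_τ z` with `τ = d(z,0)⁻²`. Since `d (δ_t z) = t d z`, it is an involution of
`ℝ^{N+l} \ {0}` with `d (ginv z) = (d z)⁻¹`. Its differential is `δ_τ` plus the rank-one map
`w ↦ dτ(w) • δ_τ (τ⁻¹ E z)`, where `E` generates the dilations, so by the matrix determinant lemma
and Euler's identity `dτ (E z) = -2 τ` the Jacobian is `τ ^ N_γ (1 - 2) = -d(z,0) ^ (-2 N_γ)`.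
This is exactly the factor produced by the weight `d(ginv z) ^ (N_γ - 2)` raised to `2*_γ`, and the
change of variables formula concludes. -/

theorem LinearMap.det_one_add_smulRight {R M : Type*} [CommRing R] [AddCommGroup M] [Module R M]
    [Module.Free R M] [Module.Finite R M] (f : M →ₗ[R] R) (v : M) :
    LinearMap.det (1 + f.smulRight v) = 1 + f v := by
  classical
  let b := Module.Free.chooseBasis R M
  have hmat : LinearMap.toMatrix b b (f.smulRight v) =
      Matrix.replicateCol Unit (b.repr v) * Matrix.replicateRow Unit (fun i => f (b i)) := by
    ext i j
    simp [LinearMap.toMatrix_apply, Matrix.mul_apply, mul_comm]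
  rw [← LinearMap.det_toMatrix b, map_add, LinearMap.toMatrix_one, hmat,
    Matrix.det_one_add_replicateCol_mul_replicateRow]
  conv_rhs => rw [← b.sum_repr v, map_sum]
  simp [dotProduct, mul_comm]

theorem ContinuousLinearMap.det_add_smulRight_apply {R M : Type*} [CommRing R]
    [TopologicalSpace R] [TopologicalSpace M] [AddCommGroup M] [Module R M]
    [ContinuousAdd M] [ContinuousSMul R M] [Module.Free R M] [Module.Finite R M]
    (A : M →L[R] M) (f : M →L[R] R) (v : M) :
    (A + f.smulRight (A v)).det = A.det * (1 + f v) := by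
  have : A + f.smulRight (A v) = A.comp (1 + f.smulRight v) := by
    ext w; simp
  rw [this, ContinuousLinearMap.det, ContinuousLinearMap.toLinearMap_comp, LinearMap.det_comp]
  exact congrArg _ (LinearMap.det_one_add_smulRight (f : M →ₗ[R] R) v)

namespace Grushin

local notation "𝔼" => (Fin N → ℝ) × (Fin l → ℝ)

theorem nsq_nonneg {n : ℕ} (x : Fin n → ℝ) : 0 ≤ nsq x :=
  Finset.sum_nonneg fun _ _ => sq_nonneg _

theorem nsq_pos {n : ℕ} {x : Fin n → ℝ} (hx : x ≠ 0) : 0 < nsq x := by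
  obtain ⟨i, hi⟩ := Function.ne_iff.1 hx
  exact Finset.sum_pos' (fun _ _ => sq_nonneg _) ⟨i, Finset.mem_univ i, sq_pos_of_ne_zero hi⟩

theorem nsq_smul {n : ℕ} (c : ℝ) (x : Fin n → ℝ) : nsq (c • x) = c ^ 2 * nsq x := by
  simp only [nsq, Pi.smul_apply, smul_eq_mul, Finset.mul_sum, mul_pow]

def gdPow (γ : ℝ) (z : 𝔼) : ℝ := 1 / (1 + γ) ^ 2 * nsq z.1 ^ (1 + γ) + nsq z.2

theorem gd_eq_gdPow_rpow (γ : ℝ) (z : 𝔼) : gd γ z = gdPow γ z ^ (1 / (2 + 2 * γ)) := rfl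

theorem gdPow_nonneg (γ : ℝ) (z : 𝔼) : 0 ≤ gdPow γ z := by
  unfold gdPow
  have := nsq_nonneg z.1
  have := nsq_nonneg z.2
  positivity

theorem gdPow_pos {γ : ℝ} (hγ : 1 + γ ≠ 0) {z : 𝔼} (hz : z ≠ 0) : 0 < gdPow γ z := by
  have hx := nsq_nonneg z.1
  have hy := nsq_nonneg z.2
  rcases eq_or_ne z.1 0 with h1 | h1
  · have h2 : z.2 ≠ 0 := fun h2 => hz (Prod.ext h1 h2)
    exact add_pos_of_nonneg_of_pos (by positivity) (nsq_pos h2)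
  · have := nsq_pos h1
    exact add_pos_of_pos_of_nonneg (by positivity) hy

theorem gd_nonneg (γ : ℝ) (z : 𝔼) : 0 ≤ gd γ z :=
  Real.rpow_nonneg (gdPow_nonneg γ z) _

theorem gd_pos {γ : ℝ} (hγ : 1 + γ ≠ 0) {z : 𝔼} (hz : z ≠ 0) : 0 < gd γ z :=
  Real.rpow_pos_of_pos (gdPow_pos hγ hz) _

def dil (γ t : ℝ) : 𝔼 →L[ℝ] 𝔼 :=
  (t • ContinuousLinearMap.id ℝ (Fin N → ℝ)).prodMap
    (t ^ (1 + γ) • ContinuousLinearMap.id ℝ (Fin l → ℝ))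

@[simp]
theorem dil_apply (γ t : ℝ) (z : 𝔼) : dil γ t z = (t • z.1, t ^ (1 + γ) • z.2) := rfl

theorem dil_one (γ : ℝ) (z : 𝔼) : dil γ 1 z = z := by simp

theorem dil_dil {γ s t : ℝ} (hs : 0 ≤ s) (ht : 0 ≤ t) (z : 𝔼) :
    dil γ s (dil γ t z) = dil γ (s * t) z := by
  simp [smul_smul, Real.mul_rpow hs ht]

theorem det_dil (γ : ℝ) {t : ℝ} (ht : 0 < t) :
    (dil (N := N) (l := l) γ t).det = t ^ ((N : ℝ) + (1 + γ) * l) := by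
  rw [ContinuousLinearMap.det, dil, ContinuousLinearMap.coe_prodMap, LinearMap.det_prodMap]
  simp [Real.rpow_add ht, Real.rpow_mul ht.le]

theorem gdPow_dil (γ : ℝ) {t : ℝ} (ht : 0 ≤ t) (z : 𝔼) :
    gdPow γ (dil γ t z) = t ^ (2 + 2 * γ) * gdPow γ z := by
  have hx := nsq_nonneg z.1
  simp only [gdPow, dil_apply, nsq_smul, Real.mul_rpow (sq_nonneg t) hx]
  rw [← Real.rpow_natCast t 2, ← Real.rpow_mul ht, ← Real.rpow_natCast (t ^ (1 + γ)),
    ← Real.rpow_mul ht]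
  push_cast
  ring_nf

theorem gd_dil {γ : ℝ} (hγ : 1 + γ ≠ 0) {t : ℝ} (ht : 0 ≤ t) (z : 𝔼) :
    gd γ (dil γ t z) = t * gd γ z := by
  have h2 : 2 + 2 * γ ≠ 0 := by contrapose! hγ; linarith
  rw [gd_eq_gdPow_rpow, gdPow_dil γ ht, Real.mul_rpow (by positivity) (gdPow_nonneg γ z),
    ← Real.rpow_mul ht, mul_one_div_cancel h2, Real.rpow_one, gd_eq_gdPow_rpow]

def ginvScale (γ : ℝ) (z : 𝔼) : ℝ := (gd γ z ^ 2)⁻¹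

theorem ginvScale_pos {γ : ℝ} (hγ : 1 + γ ≠ 0) {z : 𝔼} (hz : z ≠ 0) : 0 < ginvScale γ z := by
  have := gd_pos hγ hz
  unfold ginvScale
  positivity

theorem ginvScale_dil {γ : ℝ} (hγ : 1 + γ ≠ 0) {t : ℝ} (ht : 0 < t) (z : 𝔼) :
    ginvScale γ (dil γ t z) = t ^ (-2 : ℝ) * ginvScale γ z := by
  rw [ginvScale, ginvScale, gd_dil hγ ht.le, Real.rpow_neg ht.le, mul_pow, mul_inv]
  norm_cast

theorem ginv_eq_dil (γ : ℝ) (z : 𝔼) : ginv γ z = dil γ (ginvScale γ z) z := by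
  have hd := gd_nonneg γ z
  unfold ginvScale
  have hpow : ((gd γ z ^ 2)⁻¹) ^ (1 + γ) = (gd γ z ^ (2 + 2 * γ))⁻¹ := by
    rw [Real.inv_rpow (by positivity), ← Real.rpow_natCast, ← Real.rpow_mul hd]
    ring_nf
  ext i <;> simp [ginv, hpow, div_eq_inv_mul]

theorem ginv_zero (γ : ℝ) : ginv γ (0 : 𝔼) = 0 := by
  ext i <;> simp [ginv]

theorem gd_ginv {γ : ℝ} (hγ : 1 + γ ≠ 0) (z : 𝔼) : gd γ (ginv γ z) = (gd γ z)⁻¹ := by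
  rw [ginv_eq_dil, gd_dil hγ (by unfold ginvScale; positivity), ginvScale]
  rcases eq_or_ne (gd γ z) 0 with h | h
  · simp [h]
  · field_simp

theorem ginv_ginv {γ : ℝ} (hγ : 1 + γ ≠ 0) {z : 𝔼} (hz : z ≠ 0) : ginv γ (ginv γ z) = z := by
  have hd := (gd_pos hγ hz).ne'
  rw [ginv_eq_dil γ (ginv γ z), ginvScale, gd_ginv hγ, ginv_eq_dil γ z, ginvScale,
    dil_dil (by positivity) (by positivity), inv_pow, inv_inv,
    mul_inv_cancel₀ (pow_ne_zero 2 hd), dil_one]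

theorem ginv_ne_zero {γ : ℝ} (hγ : 1 + γ ≠ 0) {z : 𝔼} (hz : z ≠ 0) : ginv γ z ≠ 0 := by
  intro h
  apply hz
  rw [← ginv_ginv hγ hz, h, ginv_zero]

theorem bijOn_ginv {γ : ℝ} (hγ : 1 + γ ≠ 0) :
    Set.BijOn (ginv γ) ({0}ᶜ : Set 𝔼) {0}ᶜ :=
  have hinv : Set.LeftInvOn (ginv γ) (ginv γ) ({0}ᶜ : Set 𝔼) := fun _ hz => ginv_ginv hγ hz
  have hmaps : Set.MapsTo (ginv γ) ({0}ᶜ : Set 𝔼) {0}ᶜ := fun _ hz => ginv_ne_zero hγ hz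
  Set.InvOn.bijOn ⟨hinv, hinv⟩ hmaps hmaps

/-- `d/dt δ_t z` at `t = 1`. -/
def dilGen (γ : ℝ) (z : 𝔼) : 𝔼 := (z.1, (1 + γ) • z.2)

theorem hasDerivAt_dil (γ : ℝ) (z : 𝔼) {t : ℝ} (ht : 0 < t) :
    HasDerivAt (fun s => dil γ s z) (dil γ t (t⁻¹ • dilGen γ z)) t := by
  have h1 := (hasDerivAt_id t).smul_const z.1
  have h2 := (Real.hasDerivAt_rpow_const (p := 1 + γ) (Or.inl ht.ne')).smul_const z.2
  refine (h1.prodMk h2).congr_deriv ?_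
  rw [dil_apply, dilGen, Prod.smul_mk, smul_smul, smul_smul, smul_smul,
    mul_inv_cancel₀ ht.ne', Real.rpow_sub_one ht.ne']
  congr 2
  ring

theorem fderiv_dilGen_of_homogeneous {γ k : ℝ} {f : 𝔼 → ℝ} {z : 𝔼}
    (hf : DifferentiableAt ℝ f z) (hhom : ∀ t > 0, f (dil γ t z) = t ^ k * f z) :
    fderiv ℝ f z (dilGen γ z) = k * f z := by
  have hgen := hasDerivAt_dil γ z one_pos
  rw [inv_one, one_smul, dil_one] at hgen
  have hchain : HasDerivAt (fun t => f (dil γ t z)) (fderiv ℝ f z (dilGen γ z)) 1 :=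
    hf.hasFDerivAt.comp_hasDerivAt_of_eq 1 hgen (dil_one γ z).symm
  have hlin : HasDerivAt (fun t => f (dil γ t z)) (k * f z) 1 := by
    refine ((Real.hasDerivAt_rpow_const (p := k) (Or.inl one_ne_zero)).mul_const (f z))
      |>.congr_of_eventuallyEq ?_ |>.congr_deriv (by simp)
    filter_upwards [Ioi_mem_nhds one_pos] with t ht using hhom t ht
  exact hchain.unique hlin

open ContinuousLinearMap in
theorem hasFDerivAt_dil_comp {γ : ℝ} {τ : 𝔼 → ℝ} {τ' : 𝔼 →L[ℝ] ℝ} {z : 𝔼}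
    (hτ : HasFDerivAt τ τ' z) (hpos : 0 < τ z) :
    HasFDerivAt (fun w => dil γ (τ w) w)
      (dil γ (τ z) + τ'.smulRight (dil γ (τ z) ((τ z)⁻¹ • dilGen γ z))) z := by
  have h1 := hτ.smul (hasFDerivAt_fst (𝕜 := ℝ) (p := z))
  have h2 := (hτ.rpow_const (p := 1 + γ) (Or.inl hpos.ne')).smul
    (hasFDerivAt_snd (𝕜 := ℝ) (p := z))
  refine (h1.prodMk h2).congr_fderiv (ContinuousLinearMap.ext fun w => ?_)
  simp only [ContinuousLinearMap.prod_apply, add_apply, dil_apply, dilGen,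
    smulRight_apply, Prod.smul_mk, Prod.mk_add_mk]
  congr 2
  · rw [smul_inv_smul₀ hpos.ne']
  · rw [smul_smul, smul_smul, smul_smul, Real.rpow_add hpos, Real.rpow_one]
    field_simp
    rw [smul_apply, smul_eq_mul, add_sub_cancel_left]
    congr 1
    ring

theorem differentiableAt_gdPow {γ : ℝ} (hγ : 0 ≤ γ) (z : 𝔼) :
    DifferentiableAt ℝ (gdPow γ) z := by
  have hnsq : ∀ n : ℕ, Differentiable ℝ (nsq (n := n)) := fun n => by
    unfold nsq; fun_prop
  have h1 : DifferentiableAt ℝ (fun w : 𝔼 => nsq w.1 ^ (1 + γ)) z :=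
    ((hnsq N).differentiableAt.comp z differentiableAt_fst).rpow_const (Or.inr (by linarith))
  exact (h1.const_mul _).add ((hnsq l).differentiableAt.comp z differentiableAt_snd)

theorem differentiableAt_gd {γ : ℝ} (hγ : 0 ≤ γ) {z : 𝔼} (hz : z ≠ 0) :
    DifferentiableAt ℝ (gd γ) z :=
  (differentiableAt_gdPow hγ z).rpow_const (Or.inl (gdPow_pos (by linarith) hz).ne')

theorem differentiableAt_ginvScale {γ : ℝ} (hγ : 0 ≤ γ) {z : 𝔼} (hz : z ≠ 0) :
    DifferentiableAt ℝ (ginvScale γ) z :=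
  ((differentiableAt_gd hγ hz).pow 2).inv (pow_ne_zero 2 (gd_pos (by linarith) hz).ne')

theorem hasFDerivAt_ginv {γ : ℝ} (hγ : 0 ≤ γ) {z : 𝔼} (hz : z ≠ 0) :
    HasFDerivAt (ginv γ) (dil γ (ginvScale γ z) + (fderiv ℝ (ginvScale γ) z).smulRight
      (dil γ (ginvScale γ z) ((ginvScale γ z)⁻¹ • dilGen γ z))) z := by
  rw [show ginv γ = fun w => dil γ (ginvScale γ w) w from funext (ginv_eq_dil γ)]
  exact hasFDerivAt_dil_comp (differentiableAt_ginvScale hγ hz).hasFDerivAt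
    (ginvScale_pos (by linarith) hz)

theorem det_fderiv_ginv {γ : ℝ} (hγ : 0 ≤ γ) {z : 𝔼} (hz : z ≠ 0) :
    (fderiv ℝ (ginv γ) z).det = -ginvScale γ z ^ ((N : ℝ) + (1 + γ) * l) := by
  have hγ' : 1 + γ ≠ 0 := by linarith
  have hpos := ginvScale_pos hγ' hz
  have heuler : fderiv ℝ (ginvScale γ) z (dilGen γ z) = -2 * ginvScale γ z :=
    fderiv_dilGen_of_homogeneous (differentiableAt_ginvScale hγ hz)
      fun t ht => ginvScale_dil hγ' ht z
  rw [(hasFDerivAt_ginv hγ hz).fderiv, ContinuousLinearMap.det_add_smulRight_apply,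
    det_dil γ hpos, map_smul, heuler, smul_eq_mul]
  field_simp
  ring

instance : (volume : Measure 𝔼).IsAddHaarMeasure := by
  rw [Measure.volume_eq_prod]
  exact Measure.prod.instIsAddHaarMeasure _ _

theorem volume_singleton_zero (h : 0 < N + l) : volume ({0} : Set 𝔼) = 0 := by
  have : Nontrivial 𝔼 := by
    rcases Nat.eq_zero_or_pos N with hN | hN
    · have : Nonempty (Fin l) := Fin.pos_iff_nonempty.1 (by omega)
      infer_instance
    · have : Nonempty (Fin N) := Fin.pos_iff_nonempty.1 hN
      infer_instance
  exact measure_singleton 0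

theorem abs_inv_rpow_mul_rpow {r n : ℝ} (hr : 0 < r) (hn : n ≠ 2) (a : ℝ) :
    |r⁻¹ ^ (n - 2) * a| ^ (2 * n / (n - 2)) = (r ^ 2)⁻¹ ^ n * |a| ^ (2 * n / (n - 2)) := by
  have hn' : n - 2 ≠ 0 := sub_ne_zero.2 hn
  rw [abs_mul, abs_of_pos (by positivity), Real.mul_rpow (by positivity) (abs_nonneg a),
    ← Real.rpow_mul (by positivity), mul_div_cancel₀ _ hn', ← inv_pow, ← Real.rpow_natCast,
    ← Real.rpow_mul (by positivity)]
  norm_num [mul_comm]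

end Grushin

open Grushin in
theorem kelvin_critical_norm_invariant_general (γ : ℝ) (hγ : 0 ≤ γ) (hdim : 3 ≤ N + l)
    (u : (Fin N → ℝ) × (Fin l → ℝ) → ℝ) :
    (∫ z : (Fin N → ℝ) × (Fin l → ℝ),
        |gd γ (ginv γ z) ^ (((N : ℝ) + (1 + γ) * l) - 2) * u (ginv γ z)| ^
          (2 * ((N : ℝ) + (1 + γ) * l) / (((N : ℝ) + (1 + γ) * l) - 2)))
      = ∫ z : (Fin N → ℝ) × (Fin l → ℝ),
          |u z| ^ (2 * ((N : ℝ) + (1 + γ) * l) / (((N : ℝ) + (1 + γ) * l) - 2)) := by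
  have hγ' : 1 + γ ≠ 0 := by linarith
  have hdim' : (N : ℝ) + (1 + γ) * l ≠ 2 := by
    have : (3 : ℝ) ≤ N + l := by exact_mod_cast hdim
    nlinarith [(Nat.cast_nonneg l : (0 : ℝ) ≤ l)]
  have hs : MeasurableSet ({0}ᶜ : Set ((Fin N → ℝ) × (Fin l → ℝ))) :=
    (measurableSet_singleton 0).compl
  have hfull : ({0}ᶜ : Set ((Fin N → ℝ) × (Fin l → ℝ))) =ᵐ[volume] Set.univ := by
    rw [ae_eq_univ, compl_compl]
    exact volume_singleton_zero (by omega)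
  have hcov := integral_image_eq_integral_abs_det_fderiv_smul volume hs
    (fun z hz => (hasFDerivAt_ginv hγ hz).differentiableAt.hasFDerivAt.hasFDerivWithinAt)
    (bijOn_ginv hγ').injOn
    (fun z => |u z| ^ (2 * ((N : ℝ) + (1 + γ) * l) / (((N : ℝ) + (1 + γ) * l) - 2)))
  rw [(bijOn_ginv hγ').image_eq, setIntegral_congr_set hfull, setIntegral_univ] at hcov
  rw [hcov, ← setIntegral_univ, ← setIntegral_congr_set hfull]
  refine setIntegral_congr_fun hs fun z hz => ?_
  rw [gd_ginv hγ', abs_inv_rpow_mul_rpow (gd_pos hγ' hz) hdim', det_fderiv_ginv hγ hz, abs_neg,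
    abs_of_pos (Real.rpow_pos_of_pos (ginvScale_pos hγ' hz) _), smul_eq_mul, ginvScale]

/-- invariance of the critical Lebesgue norm under the Kelvin
transform: `∫|w|^{2*_γ} = ∫|u|^{2*_γ}` where `2*_γ = 2N_γ/(N_γ-2)` and
`w(z̃) = d(z,0)^{N_γ-2} u(z)`, `z = ginv γ z̃`. -/
theorem kelvin_critical_norm_invariant (γ : ℝ) (hγ : 0 ≤ γ) (hdim : 3 ≤ N + l)
    (u : (Fin N → ℝ) × (Fin l → ℝ) → ℝ) (hu : Measurable u)
    (hint : Integrable (fun z : (Fin N → ℝ) × (Fin l → ℝ) =>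
      |u z| ^ (2 * ((N : ℝ) + (1 + γ) * l) / (((N : ℝ) + (1 + γ) * l) - 2)))) :
    (∫ z : (Fin N → ℝ) × (Fin l → ℝ),
        |gd γ (ginv γ z) ^ (((N : ℝ) + (1 + γ) * l) - 2) * u (ginv γ z)| ^
          (2 * ((N : ℝ) + (1 + γ) * l) / (((N : ℝ) + (1 + γ) * l) - 2)))
      = ∫ z : (Fin N → ℝ) × (Fin l → ℝ),
          |u z| ^ (2 * ((N : ℝ) + (1 + γ) * l) / (((N : ℝ) + (1 + γ) * l) - 2)) :=
  kelvin_critical_norm_invariant_general γ hγ hdim u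
end
end
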